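/- A partition ν is a t-core partition (none of its hook lengths is divisible by t) if and only if no box of ν has hook length exactly equal to t. -/

import Mathlib

/-!
Encode `ν` by its beta-set `B = {ν i - i}` (the first-column hook lengths, shifted). The hooks
in row `j` are exactly the numbers `(ν j - j) - c` with `c ∉ B`, `c < ν j - j`. If some hook in row `j` is
`m t`, then along the chain `ν j - j, ν j - j - t, …, ν j - j - m t`, which starts in `B` and ends
outside it, some `b ∈ B` has `b - t ∉ B`, and `b - (b - t) = t` is a hook.
-/

noncomputable def conjFun (ν : ℕ → ℕ) (k : ℕ) : ℕ := Set.ncard {j : ℕ | k + 1 ≤ ν j}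

noncomputable def hook (ν : ℕ → ℕ) (j k : ℕ) : ℕ := ν j + conjFun ν k - (j + k + 1)

theorem exists_mem_sub_notMem {G : Type*} [AddGroup G] {S : Set G} (t : G) :
    ∀ (m : ℕ) (a : G), a ∈ S → a - m • t ∉ S → ∃ b ∈ S, b - t ∉ S
  | 0, a, ha, hna => absurd (by simpa using ha) hna
  | m + 1, a, ha, hna => by
    by_cases hm : a - m • t ∈ S
    · exact ⟨a - m • t, hm, by rwa [succ_nsmul', sub_add_eq_sub_sub_swap] at hna⟩
    · exact exists_mem_sub_notMem t m a ha hm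

def betaSet (ν : ℕ → ℕ) : Set ℤ := Set.range fun i => (ν i : ℤ) - i

section Partition

variable {ν : ℕ → ℕ} (hν : Antitone ν) (h0 : ∃ n, ν n = 0)
include hν h0

theorem lt_conjFun_iff {j k : ℕ} : j < conjFun ν k ↔ k < ν j := by
  have hk : ∃ n, ν n ≤ k := h0.imp fun n hn => hn.le.trans k.zero_le
  have hset : {i : ℕ | k + 1 ≤ ν i} = Set.Iio (Nat.find hk) := by
    ext i
    simp only [Set.mem_ofPred_eq, Set.mem_Iio, Nat.lt_find_iff, not_le]
    exact ⟨fun hi m hm => lt_of_lt_of_le hi (hν hm), fun hi => hi i le_rfl⟩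
  rw [conjFun, hset, Set.ncard_Iio_nat, Nat.lt_find_iff]
  simp only [not_le]
  exact ⟨fun hi => hi j le_rfl, fun hi m hm => lt_of_lt_of_le hi (hν hm)⟩

theorem natCast_hook {j k : ℕ} (hk : k < ν j) :
    (hook ν j k : ℤ) = ν j + conjFun ν k - j - k - 1 := by
  have := (lt_conjFun_iff hν h0).2 hk
  unfold hook
  omega

theorem succ_sub_conjFun_notMem_betaSet (k : ℕ) :
    (k + 1 - conjFun ν k : ℤ) ∉ betaSet ν := by
  rintro ⟨i, hi⟩
  have := (lt_conjFun_iff hν h0 (j := i) (k := k))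
  dsimp only at hi
  by_cases hki : k < ν i <;> omega

theorem exists_succ_sub_conjFun_eq_of_notMem_betaSet {c : ℤ} (hc : c ∉ betaSet ν) :
    ∃ k : ℕ, (k + 1 - conjFun ν k : ℤ) = c := by
  obtain ⟨n, hn⟩ := h0
  have hbeta_ne : ∀ i, (ν i : ℤ) - i ≠ c := fun i hi => hc ⟨i, hi⟩
  have hex : ∃ i, (ν i : ℤ) - i < c := ⟨n + (-c).toNat + 1, by
    have := hν (show n ≤ n + (-c).toNat + 1 by omega); omega⟩
  obtain ⟨j, hj, hbefore⟩ : ∃ j, (ν j : ℤ) - j < c ∧ ∀ i < j, c < (ν i : ℤ) - i :=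
    ⟨Nat.find hex, Nat.find_spec hex, fun i hi =>
      lt_of_le_of_ne (not_lt.1 (Nat.find_min hex hi)) (hbeta_ne i).symm⟩
  -- `k := c + j - 1` is the column where the boundary of `ν` steps from row `j - 1` to row `j`.
  have hcj : 0 < c + j := by
    by_contra! hneg
    have := hν (show j ≤ (-c).toNat by omega)
    have := hbeta_ne (-c).toNat
    omega
  refine ⟨(c + j - 1).toNat, ?_⟩
  suffices conjFun ν (c + j - 1).toNat = j by omega
  refine eq_of_forall_lt_iff fun i => ?_
  rw [lt_conjFun_iff hν ⟨n, hn⟩]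
  constructor
  · intro hi
    by_contra! hji
    have := hν hji
    omega
  · intro hi
    have := hν (show i ≤ j - 1 by omega)
    have := hbefore (j - 1) (by omega)
    omega

theorem sub_hook_notMem_betaSet {j k : ℕ} (hk : k < ν j) :
    (ν j - j - hook ν j k : ℤ) ∉ betaSet ν := by
  rw [natCast_hook hν h0 hk, show (ν j - j - (ν j + conjFun ν k - j - k - 1 : ℤ)) =
    k + 1 - conjFun ν k by ring]
  exact succ_sub_conjFun_notMem_betaSet hν h0 k

theorem exists_hook_eq_of_notMem_betaSet {j : ℕ} {c : ℤ} (hc : c ∉ betaSet ν)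
    (hcj : c ≤ ν j - j) : ∃ k < ν j, (hook ν j k : ℤ) = ν j - j - c := by
  obtain ⟨k, rfl⟩ := exists_succ_sub_conjFun_eq_of_notMem_betaSet hν h0 hc
  have hk : k < ν j := by
    by_contra! hjk
    have hjc : ¬ j < conjFun ν k := by rw [lt_conjFun_iff hν h0]; omega
    exact hc ⟨j, by omega⟩
  exact ⟨k, hk, by rw [natCast_hook hν h0 hk]; ring⟩

end Partition

theorem tcore_iff_no_hook_eq_general (t : ℕ) (ν : ℕ → ℕ) (hν : Antitone ν)
    (hfin : ∃ N, ∀ i, N ≤ i → ν i = 0) :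
    (∀ j k, k < ν j → ¬ t ∣ hook ν j k) ↔ (∀ j k, k < ν j → hook ν j k ≠ t) := by
  have h0 : ∃ n, ν n = 0 := hfin.imp fun N hN => hN N le_rfl
  refine ⟨fun h j k hk heq => h j k hk (heq ▸ dvd_rfl), fun h j k hk ⟨m, hm⟩ => ?_⟩
  have hend : (ν j - j : ℤ) - m • (t : ℤ) ∉ betaSet ν := by
    simpa [hm, mul_comm] using sub_hook_notMem_betaSet hν h0 hk
  obtain ⟨_, ⟨i, rfl⟩, hnext⟩ :=
    exists_mem_sub_notMem (S := betaSet ν) (t : ℤ) m _ ⟨j, rfl⟩ hend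
  obtain ⟨k', hk', hhook⟩ :=
    exists_hook_eq_of_notMem_betaSet hν h0 hnext (sub_le_self _ t.cast_nonneg)
  exact h i k' hk' (by simpa using hhook)

/-- A partition `ν` is a `t`-core (no hook length divisible by `t`) if and only if
no box of `ν` has hook length exactly `t`. -/
theorem tcore_iff_no_hook_eq (t : ℕ) (ht : 1 ≤ t) (ν : ℕ → ℕ) (hν : Antitone ν)
    (hfin : ∃ N, ∀ i, N ≤ i → ν i = 0) :
    (∀ j k, k < ν j → ¬ t ∣ hook ν j k) ↔ (∀ j k, k < ν j → hook ν j k ≠ t) :=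
  tcore_iff_no_hook_eq_general t ν hν hfin
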